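/- arXiv:2410.13818 — 6 statements merged into one kernel-verified Lean document; each statement's English description precedes it below -/
import Mathlib

section
/- Let S = [[A, B], [C, D]] be a symplectic matrix. Then ℝ^d decomposes as the direct sum of the range of B and the image of the kernel of B under A: ℝ^d = R(B) ⊕ A(ker B). -/
/-!
Symplecticity gives `Dᵀ A - Bᵀ C = 1` and `Bᵀ D = Dᵀ B`. Hence if `B y = 0` and `A y = B x`, then
`y = Dᵀ A y - Bᵀ C y = Bᵀ (D x - C y)` lies in the range of `Bᵀ`, which is orthogonal to `ker B`,
so `y = 0`. This makes `R(B)` and `A(ker B)` disjoint and `A` injective on `ker B`, so the two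
subspaces have dimensions `rank B + dim ker B = d` by rank–nullity.
-/

open Matrix Module LinearMap

theorem Submodule.finrank_map_of_disjoint_ker {R M N : Type*} [Ring R] [AddCommGroup M]
    [Module R M] [AddCommGroup N] [Module R N] {f : M →ₗ[R] N} {p : Submodule R M}
    (h : Disjoint p (ker f)) :
    finrank R (p.map f) = finrank R p := by
  rw [← range_domRestrict]
  exact (LinearEquiv.ofInjective _ (injective_domRestrict_iff.2 h)).finrank_eq.symm

theorem LinearMap.isCompl_range_map_ker {K V : Type*} [Field K] [AddCommGroup V] [Module K V]
    [FiniteDimensional K V] {f a : V →ₗ[K] V} (h : Disjoint (ker f) ((range f).comap a)) :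
    IsCompl (range f) ((ker f).map a) := by
  have hdisj : Disjoint (range f) ((ker f).map a) := by
    refine Submodule.disjoint_def.2 ?_
    rintro _ hv ⟨y, hy, rfl⟩
    rw [Submodule.disjoint_def.1 h y hy hv, map_zero]
  have hinj : Disjoint (ker f) (ker a) :=
    h.mono_right fun y hy => by simp [mem_ker.1 hy]
  refine (Submodule.isCompl_iff_disjoint _ _ ?_).2 hdisj
  rw [Submodule.finrank_map_of_disjoint_ker hinj, finrank_range_add_finrank_ker]

theorem Matrix.eq_zero_of_mulVec_eq_zero_of_eq_transpose_mulVec {m n R : Type*} [Fintype m]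
    [Fintype n] [CommRing R] [LinearOrder R] [IsStrictOrderedRing R] {B : Matrix m n R}
    {y : n → R} {w : m → R} (hy : B *ᵥ y = 0) (hw : y = Bᵀ *ᵥ w) : y = 0 := by
  refine dotProduct_self_eq_zero.1 ?_
  calc y ⬝ᵥ y = (Bᵀ *ᵥ w) ⬝ᵥ y := by rw [← hw]
    _ = w ⬝ᵥ (B *ᵥ y) := by rw [mulVec_transpose, dotProduct_mulVec]
    _ = 0 := by rw [hy, dotProduct_zero]

section Symplectic

variable {n R : Type*} [Fintype n] [DecidableEq n] [CommRing R] {A B C D : Matrix n n R}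

theorem Matrix.symplectic_fromBlocks_identities
    (hS : (fromBlocks A B C D)ᵀ * fromBlocks 0 1 (-1) 0 * fromBlocks A B C D
        = fromBlocks (0 : Matrix n n R) 1 (-1) 0) :
    Dᵀ * A - Bᵀ * C = 1 ∧ Bᵀ * D = Dᵀ * B := by
  simp only [fromBlocks_transpose, fromBlocks_multiply, fromBlocks_inj, Matrix.mul_zero,
    Matrix.mul_one, Matrix.mul_neg, Matrix.neg_mul, zero_add, add_zero] at hS
  obtain ⟨-, -, hDA, hBD⟩ := hS
  exact ⟨by rw [← neg_neg (1 : Matrix n n R), ← hDA]; abel, (neg_add_eq_zero.1 hBD).symm⟩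

theorem Matrix.eq_transpose_mulVec_of_symplectic
    (hS : (fromBlocks A B C D)ᵀ * fromBlocks 0 1 (-1) 0 * fromBlocks A B C D
        = fromBlocks (0 : Matrix n n R) 1 (-1) 0)
    {x y : n → R} (hxy : A *ᵥ y = B *ᵥ x) : y = Bᵀ *ᵥ (D *ᵥ x - C *ᵥ y) := by
  obtain ⟨hDA, hBD⟩ := symplectic_fromBlocks_identities hS
  calc y = (Dᵀ * A - Bᵀ * C) *ᵥ y := by rw [hDA, one_mulVec]
    _ = (Dᵀ * B) *ᵥ x - Bᵀ *ᵥ (C *ᵥ y) := by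
        rw [sub_mulVec, ← mulVec_mulVec, ← mulVec_mulVec, hxy, mulVec_mulVec]
    _ = Bᵀ *ᵥ (D *ᵥ x - C *ᵥ y) := by rw [← hBD, mulVec_sub, mulVec_mulVec, mulVec_mulVec]

end Symplectic

theorem symplectic_range_B_compl_A_ker_B {d : ℕ} (A B C D : Matrix (Fin d) (Fin d) ℝ)
    (hS : (fromBlocks A B C D)ᵀ * fromBlocks 0 1 (-1) 0 * fromBlocks A B C D
        = fromBlocks (0 : Matrix (Fin d) (Fin d) ℝ) 1 (-1) 0) :
    IsCompl (LinearMap.range (Matrix.toEuclideanLin B))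
      ((LinearMap.ker (Matrix.toEuclideanLin B)).map (Matrix.toEuclideanLin A)) := by
  refine isCompl_range_map_ker (Submodule.disjoint_def.2 ?_)
  rintro y hy ⟨x, hxy⟩
  rw [mem_ker, toLpLin_apply, WithLp.toLp_eq_zero] at hy
  rw [toLpLin_apply, toLpLin_apply] at hxy
  have hw := eq_transpose_mulVec_of_symplectic hS (WithLp.toLp_injective 2 hxy).symm
  exact (WithLp.ofLp_eq_zero 2).1 (eq_zero_of_mulVec_eq_zero_of_eq_transpose_mulVec hy hw)
end

section
/- Let S = [[A, B], [C, D]] be a symplectic matrix. Then ℝ^d decomposes as the direct sum ℝ^d = (ker B)ᗮ ⊕ DᵀA(ker B). -/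
/-!
The relation `DᵀA - BᵀC = 1` says that `T = DᵀA` moves each `x` by `Bᵀ(Cx)`, a vector in
`range Bᵀ = (ker B)ᗮ`. A linear map that moves the vectors of `K` only within a complement `W`
of `K` sends `K` onto another complement of `W`: if `Tx ∈ W` with `x ∈ K` then `x ∈ K ⊓ W = 0`,
and `p + q = Tp + (q - (Tp - p))` for `p ∈ K`, `q ∈ W`.
-/

open Matrix

theorem Submodule.isCompl_map_of_isCompl_of_sub_mem {R M : Type*} [Ring R] [AddCommGroup M]
    [Module R M] {K W : Submodule R M} (hKW : IsCompl K W) (T : M →ₗ[R] M)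
    (hT : ∀ x ∈ K, T x - x ∈ W) : IsCompl W (K.map T) := by
  constructor
  · rw [Submodule.disjoint_def]
    rintro _ hTxW ⟨x, hxK, rfl⟩
    have hxW : x ∈ W := by simpa using W.sub_mem hTxW (hT x hxK)
    have hx : x = 0 := (Submodule.disjoint_def.mp hKW.disjoint) x hxK hxW
    simp [hx]
  · rw [Submodule.codisjoint_iff_exists_add_eq]
    intro y
    obtain ⟨p, q, hpK, hqW, rfl⟩ := Submodule.codisjoint_iff_exists_add_eq.mp hKW.codisjoint y
    refine ⟨q - (T p - p), T p, W.sub_mem hqW (hT p hpK), ⟨p, hpK, rfl⟩, ?_⟩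
    abel

theorem Matrix.transpose_mul_sub_transpose_mul_eq_one_of_symplectic {R n : Type*} [CommRing R]
    [Fintype n] [DecidableEq n] {A B C D : Matrix n n R}
    (hS : (fromBlocks A B C D)ᵀ * fromBlocks 0 1 (-1) 0 * fromBlocks A B C D
        = fromBlocks (0 : Matrix n n R) 1 (-1) 0) :
    Dᵀ * A - Bᵀ * C = 1 := by
  rw [fromBlocks_transpose, fromBlocks_multiply, fromBlocks_multiply] at hS
  have h := (fromBlocks_inj.mp hS).2.2.1
  simp only [Matrix.mul_zero, Matrix.mul_one, Matrix.mul_neg, zero_add, add_zero, Matrix.neg_mul] at h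
  rw [← neg_neg (1 : Matrix n n R), ← h]
  abel

theorem Matrix.toEuclideanLin_transpose_apply_mem_orthogonal_ker {n : Type*} [Fintype n]
    [DecidableEq n] (B : Matrix n n ℝ) (v : EuclideanSpace ℝ n) :
    toEuclideanLin Bᵀ v ∈ (LinearMap.ker (toEuclideanLin B))ᗮ := by
  rw [LinearMap.orthogonal_ker, ← Matrix.toEuclideanLin_conjTranspose_eq_adjoint,
    conjTranspose_eq_transpose_of_trivial]
  exact LinearMap.mem_range_self _ v

theorem symplectic_kerB_perp_compl_DTA_kerB {d : ℕ} (A B C D : Matrix (Fin d) (Fin d) ℝ)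
    (hS : (fromBlocks A B C D)ᵀ * fromBlocks 0 1 (-1) 0 * fromBlocks A B C D
        = fromBlocks (0 : Matrix (Fin d) (Fin d) ℝ) 1 (-1) 0) :
    IsCompl ((LinearMap.ker (Matrix.toEuclideanLin B))ᗮ)
      ((LinearMap.ker (Matrix.toEuclideanLin B)).map (Matrix.toEuclideanLin (Dᵀ * A))) := by
  have hDA : Dᵀ * A - 1 = Bᵀ * C := by
    rw [← transpose_mul_sub_transpose_mul_eq_one_of_symplectic hS]
    abel
  refine Submodule.isCompl_map_of_isCompl_of_sub_mem
    (Submodule.isCompl_orthogonal _) _ fun x _ ↦ ?_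
  have hx : toEuclideanLin (Dᵀ * A) x - x = toEuclideanLin Bᵀ (toEuclideanLin C x) := by
    ext i
    simp [← hDA, sub_mulVec, mulVec_mulVec]
  rw [hx]
  exact toEuclideanLin_transpose_apply_mem_orthogonal_ker B _
end

section
/- Let S = [[A, B], [C, D]] be a symplectic matrix. Then D maps the kernel of B onto the orthogonal complement of the range of B, i.e., D(ker B) = (R(B))ᗮ, and this restriction D : ker(B) → (R(B))ᗮ is a linear isomorphism. -/
/-!
The symplectic relations give `DᵀB = BᵀD` and `AᵀD - CᵀB = 1`. The first says
`⟪D x, B y⟫ = ⟪B x, D y⟫`, so `D` sends `ker B` into `(range B)ᗮ`; the second says that `B` and `D`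
have no common kernel vector, so `D` is injective on `ker B`. Equality then follows from
`dim ker B = d - rank B = dim (range B)ᗮ`.
-/

open Matrix

theorem Submodule.finrank_map_of_injOn {R M N : Type*} [Ring R] [StrongRankCondition R]
    [AddCommGroup M] [Module R M] [AddCommGroup N] [Module R N] {f : M →ₗ[R] N}
    {p : Submodule R M} (hf : Set.InjOn f p) :
    Module.finrank R (p.map f) = Module.finrank R p :=
  (LinearEquiv.ofBijective (f.submoduleMap p)
    ⟨f.submoduleMap_injective_of_injOn hf, f.submoduleMap_surjective p⟩).finrank_eq.symm

theorem LinearMap.disjoint_ker_of_comp_sub_comp_eq_id {R M N : Type*} [Ring R]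
    [AddCommGroup M] [Module R M] [AddCommGroup N] [Module R N] {f g : M →ₗ[R] N}
    {a c : N →ₗ[R] M} (h : a ∘ₗ g - c ∘ₗ f = LinearMap.id) :
    Disjoint (LinearMap.ker f) (LinearMap.ker g) := by
  refine Submodule.disjoint_def.mpr fun x hf hg => ?_
  calc x = (a ∘ₗ g - c ∘ₗ f) x := by rw [h, LinearMap.id_apply]
    _ = 0 := by simp [LinearMap.mem_ker.mp hf, LinearMap.mem_ker.mp hg]

section InnerProductSpace

open LinearMap Module

variable {𝕜 E : Type*} [RCLike 𝕜] [NormedAddCommGroup E] [InnerProductSpace 𝕜 E]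
  [FiniteDimensional 𝕜 E]

theorem LinearMap.finrank_orthogonal_range (f : E →ₗ[𝕜] E) :
    finrank 𝕜 (range f)ᗮ = finrank 𝕜 (ker f) := by
  have := (range f).finrank_add_finrank_orthogonal
  have := f.finrank_range_add_finrank_ker
  omega

theorem LinearMap.map_ker_le_orthogonal_range {f g : E →ₗ[𝕜] E}
    (hfg : g.adjoint ∘ₗ f = f.adjoint ∘ₗ g) : (ker f).map g ≤ (range f)ᗮ := by
  rintro _ ⟨x, hx, rfl⟩
  rw [Submodule.mem_orthogonal]
  rintro _ ⟨y, rfl⟩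
  rw [← inner_conj_symm, ← adjoint_inner_right, ← comp_apply, hfg, comp_apply,
    adjoint_inner_right, mem_ker.mp hx, inner_zero_left, map_zero]

theorem LinearMap.map_ker_eq_orthogonal_range {f g : E →ₗ[𝕜] E}
    (hfg : g.adjoint ∘ₗ f = f.adjoint ∘ₗ g) (hker : Disjoint (ker f) (ker g)) :
    (ker f).map g = (range f)ᗮ := by
  refine Submodule.eq_of_le_of_finrank_le (map_ker_le_orthogonal_range hfg) ?_
  rw [finrank_orthogonal_range, Submodule.finrank_map_of_injOn (disjoint_ker_iff_injOn.mp hker)]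

end InnerProductSpace

theorem Matrix.fromBlocks_symplectic_iff {R n : Type*} [CommRing R] [Fintype n] [DecidableEq n]
    {A B C D : Matrix n n R} :
    (fromBlocks A B C D)ᵀ * fromBlocks 0 1 (-1) 0 * fromBlocks A B C D = fromBlocks 0 1 (-1) 0 ↔
      Cᵀ * A = Aᵀ * C ∧ Aᵀ * D - Cᵀ * B = 1 ∧ Dᵀ * B = Bᵀ * D := by
  rw [fromBlocks_transpose, fromBlocks_multiply, fromBlocks_multiply, fromBlocks_inj]
  simp only [Matrix.mul_zero, Matrix.mul_one, Matrix.mul_neg, Matrix.neg_mul, add_zero, zero_add]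
  constructor
  · rintro ⟨hAC, hAD, -, hBD⟩
    exact ⟨by linear_combination (norm := noncomm_ring) -hAC,
      by linear_combination (norm := noncomm_ring) hAD,
      by linear_combination (norm := noncomm_ring) -hBD⟩
  · rintro ⟨hCA, hAD, hDB⟩
    refine ⟨by rw [hCA, neg_add_cancel], by rw [← hAD]; noncomm_ring, ?_,
      by rw [hDB, neg_add_cancel]⟩
    -- the lower-left block is minus the transpose of the upper-right one
    have hDA := congrArg transpose hAD
    simp only [transpose_sub, transpose_mul, transpose_transpose, transpose_one] at hDA
    linear_combination (norm := noncomm_ring) -hDA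

theorem symplectic_D_iso_kerB_rangeB_perp {d : ℕ} (A B C D : Matrix (Fin d) (Fin d) ℝ)
    (hS : (fromBlocks A B C D)ᵀ * fromBlocks 0 1 (-1) 0 * fromBlocks A B C D
        = fromBlocks (0 : Matrix (Fin d) (Fin d) ℝ) 1 (-1) 0) :
    (LinearMap.ker (Matrix.toEuclideanLin B)).map (Matrix.toEuclideanLin D)
        = (LinearMap.range (Matrix.toEuclideanLin B))ᗮ
      ∧ Set.InjOn (Matrix.toEuclideanLin D)
        (LinearMap.ker (Matrix.toEuclideanLin B) : Set (EuclideanSpace ℝ (Fin d))) := by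
  obtain ⟨-, hAD, hDB⟩ := Matrix.fromBlocks_symplectic_iff.mp hS
  have hadj : (toEuclideanLin D).adjoint ∘ₗ toEuclideanLin B
      = (toEuclideanLin B).adjoint ∘ₗ toEuclideanLin D := by
    simp only [← toEuclideanLin_conjTranspose_eq_adjoint, conjTranspose_eq_transpose_of_trivial,
      ← toLpLin_mul_same, hDB]
  have hker : Disjoint (LinearMap.ker (toEuclideanLin B)) (LinearMap.ker (toEuclideanLin D)) :=
    LinearMap.disjoint_ker_of_comp_sub_comp_eq_id (a := toEuclideanLin Aᵀ) (c := toEuclideanLin Cᵀ)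
      (by rw [← toLpLin_mul_same, ← toLpLin_mul_same, ← map_sub, hAD, toLpLin_one])
  exact ⟨LinearMap.map_ker_eq_orthogonal_range hadj hker, LinearMap.disjoint_ker_iff_injOn.mp hker⟩
end

section
/- Let S = [[A, B], [C, D]] be a symplectic matrix. Then the orthogonal complement of the range of B is contained in the range of D: R(B)ᗮ ⊆ R(D). -/
/-!
Symplecticity of `S` is equivalent to that of `Sᵀ`, i.e. to `S J Sᵀ = J`, whose lower-left block
reads `D Aᵀ - C Bᵀ = 1`. The orthogonal complement of the range of `B` is the kernel of `Bᵀ`, and on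
that kernel the identity collapses to `D (Aᵀ x) = x`.
-/

open Matrix

namespace SymplecticGroup

variable {l R : Type*} [DecidableEq l] [CommRing R]

theorem fromBlocks_zero_one_neg_one_zero :
    fromBlocks (0 : Matrix l l R) 1 (-1) 0 = -J l R := by
  simp [J, fromBlocks_neg]

variable [Fintype l]

theorem mem_iff_transpose_mul_neg_J {S : Matrix (l ⊕ l) (l ⊕ l) R} :
    S ∈ symplecticGroup l R ↔ Sᵀ * (-J l R) * S = -J l R := by
  rw [mem_iff', Matrix.mul_neg, Matrix.neg_mul, neg_inj]

theorem mul_transpose_sub_mul_transpose_eq_one {A B C D : Matrix l l R}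
    (h : fromBlocks A B C D ∈ symplecticGroup l R) : D * Aᵀ - C * Bᵀ = 1 := by
  have hT := transpose_mem h
  rw [fromBlocks_transpose, fromBlocks_mem_iff, transpose_transpose, transpose_transpose] at hT
  simpa using congr(transpose $(hT.2.2))

end SymplecticGroup

theorem LinearMap.ker_le_range_of_comp_sub_comp_eq_id {R M N K : Type*} [Ring R]
    [AddCommGroup M] [AddCommGroup N] [AddCommGroup K] [Module R M] [Module R N] [Module R K]
    {d : M →ₗ[R] N} {a : N →ₗ[R] M} {c : K →ₗ[R] N} {b : N →ₗ[R] K}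
    (h : d ∘ₗ a - c ∘ₗ b = LinearMap.id) : ker b ≤ range d := by
  intro x hx
  refine ⟨a x, ?_⟩
  simpa [mem_ker.mp hx] using congr($h x)

theorem Matrix.ker_toLpLin_le_range_of_mul_sub_mul_eq_one {R m n k : Type*} [CommRing R]
    [Fintype m] [Fintype n] [Fintype k] [DecidableEq m] [DecidableEq n] [DecidableEq k]
    (p : ENNReal) {D : Matrix n m R} {A : Matrix m n R} {C : Matrix n k R} {B : Matrix k n R}
    (h : D * A - C * B = 1) :
    LinearMap.ker (toLpLin p p B) ≤ LinearMap.range (toLpLin p p D) :=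
  LinearMap.ker_le_range_of_comp_sub_comp_eq_id (a := toLpLin p p A) (c := toLpLin p p C) <| by
    simpa using congr(toLpLin p p $h)

theorem symplectic_rangeB_perp_subset_rangeD {d : ℕ} (A B C D : Matrix (Fin d) (Fin d) ℝ)
    (hS : (fromBlocks A B C D)ᵀ * fromBlocks 0 1 (-1) 0 * fromBlocks A B C D
        = fromBlocks (0 : Matrix (Fin d) (Fin d) ℝ) 1 (-1) 0) :
    (LinearMap.range (Matrix.toEuclideanLin B))ᗮ
      ≤ LinearMap.range (Matrix.toEuclideanLin D) := by
  rw [SymplecticGroup.fromBlocks_zero_one_neg_one_zero] at hS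
  have hsymp := SymplecticGroup.mem_iff_transpose_mul_neg_J.2 hS
  rw [LinearMap.orthogonal_range, ← toEuclideanLin_conjTranspose_eq_adjoint,
    conjTranspose_eq_transpose_of_trivial]
  exact ker_toLpLin_le_range_of_mul_sub_mul_eq_one 2
    (SymplecticGroup.mul_transpose_sub_mul_transpose_eq_one hsymp)
end

section
/- Let S = [[A, B], [C, D]] be a symplectic matrix. Then A maps the orthogonal complement of the kernel of B into the range of B: A((ker B)ᗮ) ⊆ R(B). -/
open Matrix

lemma toEuclideanLin_mul_aux {d : ℕ} (M N : Matrix (Fin d) (Fin d) ℝ)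
    (x : EuclideanSpace ℝ (Fin d)) :
    Matrix.toEuclideanLin (M * N) x = Matrix.toEuclideanLin M (Matrix.toEuclideanLin N x) := by
  simp [Matrix.toEuclideanLin_apply, Matrix.mulVec_mulVec]

lemma kerperp_le_range_adjoint {d : ℕ}
    (T : EuclideanSpace ℝ (Fin d) →ₗ[ℝ] EuclideanSpace ℝ (Fin d)) :
    (LinearMap.ker T)ᗮ ≤ LinearMap.range (LinearMap.adjoint T) := by
  have h1 : (LinearMap.range (LinearMap.adjoint T))ᗮ ≤ LinearMap.ker T := by
    intro x hx
    have h := hx (LinearMap.adjoint T (T x)) ⟨T x, rfl⟩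
    rw [LinearMap.adjoint_inner_left] at h
    exact inner_self_eq_zero.mp h
  calc (LinearMap.ker T)ᗮ ≤ ((LinearMap.range (LinearMap.adjoint T))ᗮ)ᗮ :=
        Submodule.orthogonal_le h1
    _ = LinearMap.range (LinearMap.adjoint T) :=
        Submodule.orthogonal_orthogonal _

theorem symplectic_A_kerB_perp_subset_rangeB {d : ℕ} (A B C D : Matrix (Fin d) (Fin d) ℝ)
    (hS : (fromBlocks A B C D)ᵀ * fromBlocks 0 1 (-1) 0 * fromBlocks A B C D
        = fromBlocks (0 : Matrix (Fin d) (Fin d) ℝ) 1 (-1) 0) :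
    ((LinearMap.ker (Matrix.toEuclideanLin B))ᗮ).map (Matrix.toEuclideanLin A)
      ≤ LinearMap.range (Matrix.toEuclideanLin B) := by
  have hJ : Matrix.J (Fin d) ℝ = fromBlocks 0 (-1) 1 0 := rfl
  -- S is in the symplectic group
  have hmem : fromBlocks A B C D ∈ Matrix.symplecticGroup (Fin d) ℝ := by
    rw [SymplecticGroup.mem_iff']
    have hJ' : Matrix.J (Fin d) ℝ = -(fromBlocks 0 1 (-1) 0) := by
      rw [hJ]
      ext (i|i) (j|j) <;> simp [fromBlocks]
    rw [hJ', Matrix.mul_neg, Matrix.neg_mul, hS]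
  have hmem' := SymplecticGroup.mem_iff.mp hmem
  -- extract B Aᵀ = A Bᵀ
  have hAB : B * Aᵀ = A * Bᵀ := by
    rw [hJ, fromBlocks_transpose, fromBlocks_multiply, fromBlocks_multiply] at hmem'
    have h11 := congrArg Matrix.toBlocks₁₁ hmem'
    simp only [Matrix.toBlocks_fromBlocks₁₁] at h11
    simp at h11
    rwa [add_neg_eq_zero] at h11
  -- main argument
  rintro x ⟨y, hy, rfl⟩
  have hy' : y ∈ LinearMap.range (LinearMap.adjoint (Matrix.toEuclideanLin B)) :=
    kerperp_le_range_adjoint _ hy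
  obtain ⟨z, hz⟩ := hy'
  rw [← Matrix.toEuclideanLin_conjTranspose_eq_adjoint] at hz
  have hBt : Bᴴ = Bᵀ := Matrix.conjTranspose_eq_transpose_of_trivial B
  rw [hBt] at hz
  refine ⟨Matrix.toEuclideanLin Aᵀ z, ?_⟩
  rw [← toEuclideanLin_mul_aux, hAB, toEuclideanLin_mul_aux, hz]
end

section
/- Let S = [[A, B], [C, D]] be a symplectic matrix. Then for every t in the orthogonal complement of ker(B), one has At = BAᵀ(B⁺)ᵀ t, where B⁺ is the Moore–Penrose pseudoinverse of B. -/
/-!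
Symplecticity of `S` is equivalent to that of `Sᵀ`, i.e. `S J Sᵀ = J`, whose upper-left block
says `A Bᵀ = B Aᵀ`. Every `t ⊥ ker B` lies in the range of `Bᵀ`, say `t = Bᵀ s`, and then
`B Aᵀ B⁺ᵀ Bᵀ s = A Bᵀ B⁺ᵀ Bᵀ s = A (B B⁺ B)ᵀ s = A Bᵀ s = A t`.
-/

open Matrix

namespace SymplecticGroup

variable {l R : Type*} [Fintype l] [DecidableEq l] [CommRing R]

theorem mem_iff_transpose_mul_fromBlocks_mul {S : Matrix (l ⊕ l) (l ⊕ l) R} :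
    S ∈ symplecticGroup l R ↔
      Sᵀ * fromBlocks 0 1 (-1) 0 * S = fromBlocks (0 : Matrix l l R) 1 (-1) 0 := by
  have hJ : J l R = -fromBlocks 0 1 (-1) 0 := by simp [J, fromBlocks_neg]
  rw [mem_iff', hJ, Matrix.mul_neg, Matrix.neg_mul, neg_inj]

theorem mul_transpose_comm_of_fromBlocks_mem {A B C D : Matrix l l R}
    (hS : fromBlocks A B C D ∈ symplecticGroup l R) : A * Bᵀ = B * Aᵀ := by
  have h₁₁ := congrArg toBlocks₁₁ (mem_iff.mp hS)
  simp only [J, fromBlocks_multiply, fromBlocks_transpose, toBlocks_fromBlocks₁₁] at h₁₁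
  simpa [sub_eq_zero, eq_comm, ← sub_eq_add_neg] using h₁₁

end SymplecticGroup

namespace Matrix

theorem mul_transpose_mul_transpose_mul_transpose_eq_of_mul_mul_eq
    {m n R : Type*} [Fintype m] [Fintype n] [CommRing R] {A B : Matrix m n R}
    {G : Matrix n m R} (hAB : A * Bᵀ = B * Aᵀ) (hG : B * G * B = B) :
    B * Aᵀ * Gᵀ * Bᵀ = A * Bᵀ := by
  calc B * Aᵀ * Gᵀ * Bᵀ = A * (B * G * B)ᵀ := by
        rw [← hAB]; simp only [transpose_mul, Matrix.mul_assoc]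
    _ = A * Bᵀ := by rw [hG]

theorem orthogonal_ker_toEuclideanLin {m n 𝕜 : Type*} [Fintype m] [Fintype n] [DecidableEq m]
    [DecidableEq n] [RCLike 𝕜] (B : Matrix m n 𝕜) :
    (LinearMap.ker (toEuclideanLin B))ᗮ = LinearMap.range (toEuclideanLin Bᴴ) := by
  rw [LinearMap.orthogonal_ker, toEuclideanLin_conjTranspose_eq_adjoint]

end Matrix

theorem symplectic_A_eq_BAT_BpT_on_kerB_perp_general {d : ℕ} (A B C D Bp : Matrix (Fin d) (Fin d) ℝ)
    (hS : (fromBlocks A B C D)ᵀ * fromBlocks 0 1 (-1) 0 * fromBlocks A B C D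
        = fromBlocks (0 : Matrix (Fin d) (Fin d) ℝ) 1 (-1) 0)
    (h1 : B * Bp * B = B) :
    ∀ t ∈ (LinearMap.ker (Matrix.toEuclideanLin B))ᗮ,
      Matrix.toEuclideanLin A t = Matrix.toEuclideanLin (B * Aᵀ * Bpᵀ) t := by
  have hAB : A * Bᵀ = B * Aᵀ := SymplecticGroup.mul_transpose_comm_of_fromBlocks_mem
    (SymplecticGroup.mem_iff_transpose_mul_fromBlocks_mul.mpr hS)
  intro t ht
  rw [orthogonal_ker_toEuclideanLin, conjTranspose_eq_transpose_of_trivial] at ht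
  obtain ⟨s, rfl⟩ := ht
  simp only [← LinearMap.comp_apply, ← toLpLin_mul_same,
    mul_transpose_mul_transpose_mul_transpose_eq_of_mul_mul_eq hAB h1]

theorem symplectic_A_eq_BAT_BpT_on_kerB_perp {d : ℕ} (A B C D Bp : Matrix (Fin d) (Fin d) ℝ)
    (hS : (fromBlocks A B C D)ᵀ * fromBlocks 0 1 (-1) 0 * fromBlocks A B C D
        = fromBlocks (0 : Matrix (Fin d) (Fin d) ℝ) 1 (-1) 0)
    (h1 : B * Bp * B = B) (h2 : Bp * B * Bp = Bp)
    (h3 : (B * Bp)ᵀ = B * Bp) (h4 : (Bp * B)ᵀ = Bp * B) :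
    ∀ t ∈ (LinearMap.ker (Matrix.toEuclideanLin B))ᗮ,
      Matrix.toEuclideanLin A t = Matrix.toEuclideanLin (B * Aᵀ * Bpᵀ) t :=
  symplectic_A_eq_BAT_BpT_on_kerB_perp_general A B C D Bp hS h1
end
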